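/- Let r ≥ 2, k ≥ 1, and work in the polynomial ring R = MvPolynomial (Fin k) ℚ with variables X_1, …, X_k. For every t with 1 ≤ t ≤ r, every injective map i : Fin t → Fin r, and every injective map j : Fin t → Fin k, the determinant of the block matrix G over R (rows and columns indexed by Fin t × (ZMod r)^k) whose (u,v) block equals X_{j(v)}^{i(u)} · Q_{j(v)}^{i(u)} (with Q mapped entrywise into R) is a nonzero polynomial. -/

import Mathlib

/-!
Every entry of `G` is zero or a monomial with coefficient one, so each permutation contributes
`±` a single monomial to the determinant. The block-diagonal permutation
`(u, x) ↦ (u, x + i(u) e_{j u})` contributes `∏ X_{j u}^{|(ℤ/r)^k| i(u)}`. Any permutation `τ`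
contributing the same monomial has, after weighting the variable `X_{j v}` by `i(v)`,
`∑ i(z) i(τ z) = ∑ i(z)²`; hence `∑ (i(z) - i(τ z))² = 0`, so `τ` preserves the blocks, and
within a block the translation pins it down. That monomial therefore has coefficient `±1`.
-/

open MvPolynomial

section TranslationMatrix

variable {G : Type*} [AddMonoid G] [DecidableEq G] (R : Type*) [Semiring R]

def translationMatrix (e : G) : Matrix G G R :=
  Matrix.of fun x y => if x = y + e then 1 else 0

theorem translationMatrix_zero : translationMatrix R (0 : G) = 1 := by
  ext x y
  simp [translationMatrix, Matrix.one_apply]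

theorem translationMatrix_mul [Fintype G] (a b : G) :
    translationMatrix R a * translationMatrix R b = translationMatrix R (b + a) := by
  ext x y
  simp [translationMatrix, Matrix.mul_apply, add_assoc]

theorem translationMatrix_pow [Fintype G] (e : G) (m : ℕ) :
    translationMatrix R e ^ m = translationMatrix R (m • e) := by
  induction m with
  | zero => rw [pow_zero, zero_nsmul, translationMatrix_zero]
  | succ m ih => rw [pow_succ, ih, translationMatrix_mul, succ_nsmul']

end TranslationMatrix

theorem eq_of_sum_mul_comp_perm_eq_sum_mul_self {ι R : Type*} [Fintype ι] [CommRing R]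
    [LinearOrder R] [IsStrictOrderedRing R] {f : ι → R} {τ : Equiv.Perm ι}
    (h : ∑ z, f z * f (τ z) = ∑ z, f z * f z) (z : ι) : f (τ z) = f z := by
  have hsq : ∑ z, (f z - f (τ z)) ^ 2 = 0 := by
    have hperm : ∑ z, f (τ z) ^ 2 = ∑ z, f z ^ 2 := Equiv.sum_comp τ (f · ^ 2)
    calc ∑ z, (f z - f (τ z)) ^ 2
        = ∑ z, f z ^ 2 + ∑ z, f (τ z) ^ 2 - 2 * ∑ z, f z * f (τ z) := by
          simp only [Finset.mul_sum, ← Finset.sum_add_distrib, ← Finset.sum_sub_distrib]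
          exact Finset.sum_congr rfl fun z _ => by ring
      _ = 0 := by
          rw [hperm, h, Finset.mul_sum, ← Finset.sum_add_distrib, ← Finset.sum_sub_distrib]
          exact Finset.sum_eq_zero fun z _ => by ring
  have := (Finset.sum_eq_zero_iff_of_nonneg fun z _ => sq_nonneg (f z - f (τ z))).mp hsq z
    (Finset.mem_univ z)
  linarith [pow_eq_zero_iff two_ne_zero |>.mp this]

section MonomialPatternDet

variable {ι σ R : Type*} [Fintype ι] [CommRing R]
  (P : ι → ι → Prop) [DecidableRel P] (e : ι → ι → σ →₀ ℕ)

theorem prod_monomialPattern_perm (τ : Equiv.Perm ι) :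
    ∏ z, (if P (τ z) z then monomial (e (τ z) z) (1 : R) else 0) =
      if ∀ z, P (τ z) z then monomial (∑ z, e (τ z) z) 1 else 0 := by
  rw [Fintype.prod_ite_zero, monomial_sum_one]

theorem coeff_det_monomialPattern [DecidableEq ι] {π : Equiv.Perm ι} (hπ : ∀ z, P (π z) z)
    (huniq : ∀ τ : Equiv.Perm ι, (∀ z, P (τ z) z) → ∑ z, e (τ z) z = ∑ z, e (π z) z → τ = π) :
    coeff (∑ z, e (π z) z)
        (Matrix.of fun p q => if P p q then monomial (e p q) (1 : R) else 0).det =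
      Equiv.Perm.sign π := by
  classical
  rw [Matrix.det_apply', coeff_sum, Finset.sum_eq_single π]
  · rw [← zsmul_eq_mul, coeff_smul]
    simp only [Matrix.of_apply, prod_monomialPattern_perm, if_pos hπ, coeff_monomial, if_true,
      zsmul_eq_mul, mul_one]
  · intro τ _ hτ
    rw [← zsmul_eq_mul, coeff_smul]
    simp only [Matrix.of_apply, prod_monomialPattern_perm]
    split_ifs with hP
    · rw [coeff_monomial, if_neg fun hd => hτ (huniq τ hP hd), smul_zero]
    · rw [coeff_zero, smul_zero]
  · exact fun h => absurd (Finset.mem_univ π) h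

theorem det_monomialPattern_ne_zero [DecidableEq ι] [Nontrivial R] {π : Equiv.Perm ι}
    (hπ : ∀ z, P (π z) z)
    (huniq : ∀ τ : Equiv.Perm ι, (∀ z, P (τ z) z) → ∑ z, e (τ z) z = ∑ z, e (π z) z → τ = π) :
    (Matrix.of fun p q => if P p q then monomial (e p q) (1 : R) else 0).det ≠ 0 := fun h => by
  have := coeff_det_monomialPattern P e hπ huniq (R := R)
  rw [h, coeff_zero] at this
  rcases Int.units_eq_one_or (Equiv.Perm.sign π) with hs | hs <;> simp [hs] at this

end MonomialPatternDet

theorem X_pow_mul_translationMatrix_pow_apply {G σ R : Type*} [AddMonoid G] [Fintype G]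
    [DecidableEq G] [CommSemiring R] (a : σ) (g : G) (n : ℕ) (x y : G) :
    X a ^ n * (translationMatrix (MvPolynomial σ R) g ^ n) x y =
      if x = y + n • g then monomial (Finsupp.single a n) 1 else 0 := by
  rw [translationMatrix_pow, X_pow_eq_monomial]
  simp only [translationMatrix, Matrix.of_apply, mul_ite, mul_one, mul_zero]

theorem apply_perm_eq_of_sum_single_eq {ι α κ : Type*} [Fintype ι] {a : ι → α} {i : α → ℕ}
    {j : α → κ} (hi : Function.Injective i) (hj : Function.Injective j) {τ : Equiv.Perm ι}
    (h : ∑ z, Finsupp.single (j (a z)) (i (a (τ z))) = ∑ z, Finsupp.single (j (a z)) (i (a z)))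
    (z : ι) : a (τ z) = a z := by
  let weight : (κ →₀ ℕ) →ₗ[ℕ] ℤ :=
    Finsupp.linearCombination ℕ (Function.extend j (fun x => (i x : ℤ)) 0)
  have hweight : ∀ x y, weight (Finsupp.single (j x) (i y)) = (i x : ℤ) * i y := fun x y => by
    rw [Finsupp.linearCombination_single, hj.extend_apply, nsmul_eq_mul, mul_comm]
  have hsum : ∑ z, (i (a z) : ℤ) * i (a (τ z)) = ∑ z, (i (a z) : ℤ) * i (a z) := by
    simpa only [map_sum, hweight] using congrArg weight h
  exact hi (by exact_mod_cast eq_of_sum_mul_comp_perm_eq_sum_mul_self hsum z)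

/-- Over `R = MvPolynomial (Fin k) ℚ`, the determinant of the block
matrix `G` whose `(u,v)` block is `X (j v) ^ (i u) • Q (j v) ^ (i u)` (where `Q j`
is the permutation matrix of `x ↦ x + e j` on `(ZMod r)^k`) is a nonzero polynomial,
for every `1 ≤ t ≤ r` and injective `i : Fin t → Fin r`, `j : Fin t → Fin k`. -/
theorem construction1_det_nonzero_polynomial (r k : ℕ) (hr : 2 ≤ r) (t : ℕ)
    (i : Fin t → Fin r) (hi : Function.Injective i)
    (j : Fin t → Fin k) (hj : Function.Injective j) :
    haveI : NeZero r := ⟨by omega⟩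
    Matrix.det (Matrix.of
      fun (p q : Fin t × (Fin k → ZMod r)) =>
        (X (j q.1) : MvPolynomial (Fin k) ℚ) ^ (i p.1 : ℕ) *
          ((Matrix.of fun (x y : Fin k → ZMod r) =>
              if x = y + Pi.single (j q.1) 1 then (1 : MvPolynomial (Fin k) ℚ) else 0) ^
            (i p.1 : ℕ)) p.2 q.2) ≠ 0 := by
  have : NeZero r := ⟨by omega⟩
  let P : Fin t × (Fin k → ZMod r) → Fin t × (Fin k → ZMod r) → Prop := fun p q =>
    p.2 = q.2 + (i p.1 : ℕ) • Pi.single (j q.1) 1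
  let e : Fin t × (Fin k → ZMod r) → Fin t × (Fin k → ZMod r) → Fin k →₀ ℕ := fun p q =>
    Finsupp.single (j q.1) (i p.1 : ℕ)
  let π : Equiv.Perm (Fin t × (Fin k → ZMod r)) :=
    Equiv.prodShear (Equiv.refl _) fun v => Equiv.addRight ((i v : ℕ) • Pi.single (j v) 1)
  have hπ_unique : ∀ τ : Equiv.Perm (Fin t × (Fin k → ZMod r)), (∀ z, P (τ z) z) →
      ∑ z, e (τ z) z = ∑ z, e (π z) z → τ = π := fun τ hP he => by
    have hfst := apply_perm_eq_of_sum_single_eq (a := Prod.fst) (Fin.val_injective.comp hi) hj he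
    exact Equiv.ext fun z => Prod.ext (hfst z) (by rw [hP z, hfst z]; rfl)
  convert det_monomialPattern_ne_zero (R := ℚ) P e (π := π) (fun _ => rfl) hπ_unique using 3
  funext p q
  exact X_pow_mul_translationMatrix_pow_apply (R := ℚ) (j q.1) (Pi.single (j q.1) 1) (i p.1) p.2 q.2
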